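/- arXiv:math/0507105 — 2 statements merged into one kernel-verified Lean document; each statement's English description precedes it below -/
import Mathlib

section
/- For every integer d ≥ 2 and every function n : ℕ → ℚ, Σ_{d₁+d₂=d, d₁,d₂≥1} (C(3d−4,3d₁−2)·d₁·d₂ − C(3d−4,3d₁−1)·d₁²)·d₁·d₂·n(d₁)·n(d₂) = (1/(6(d−1)))·Σ_{d₁+d₂=d, d₁,d₂≥1} (d₁·d₂ − 2(d₁−d₂)²/(3d−2))·C(3d−2,3d₁−1)·d₁·d₂·n(d₁)·n(d₂). (The symmetrized form of the Kontsevich recursion equals the unsymmetrized form.) -/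
set_option maxHeartbeats 1000000

lemma kont_key (x y : ℕ) (hx : 1 ≤ x) (hy : 1 ≤ y) :
    (((3 * (x + y) - 4).choose (3 * x - 2) : ℚ) * x * y
        - ((3 * (x + y) - 4).choose (3 * x - 1) : ℚ) * (x : ℚ) ^ 2) * x * y
      + (((3 * (x + y) - 4).choose (3 * y - 2) : ℚ) * y * x
        - ((3 * (x + y) - 4).choose (3 * y - 1) : ℚ) * (y : ℚ) ^ 2) * y * x
    = 2 * (1 / (6 * ((x : ℚ) + y - 1))) *
        (((x : ℚ) * y - 2 * ((x : ℚ) - y) ^ 2 / (3 * ((x : ℚ) + y) - 2))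
          * ((3 * (x + y) - 2).choose (3 * x - 1) : ℚ) * x * y) := by
  obtain ⟨x', rfl⟩ : ∃ x', x = x' + 1 := ⟨x - 1, by omega⟩
  obtain ⟨y', rfl⟩ : ∃ y', y = y' + 1 := ⟨y - 1, by omega⟩
  rw [show 3 * (x' + 1 + (y' + 1)) - 4 = 3 * x' + 3 * y' + 2 by omega,
    show 3 * (x' + 1) - 2 = 3 * x' + 1 by omega,
    show 3 * (x' + 1) - 1 = 3 * x' + 2 by omega,
    show 3 * (y' + 1) - 2 = 3 * y' + 1 by omega,
    show 3 * (y' + 1) - 1 = 3 * y' + 2 by omega,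
    show 3 * (x' + 1 + (y' + 1)) - 2 = 3 * x' + 3 * y' + 4 by omega]
  have c1 : (((3 * x' + 3 * y' + 2).choose (3 * x' + 1)) : ℚ)
      = (Nat.factorial (3 * x' + 3 * y' + 2) : ℚ) / ((Nat.factorial (3 * x' + 1) : ℚ) * (Nat.factorial (3 * y' + 1) : ℚ)) := by
    rw [Nat.cast_choose ℚ (by omega), show 3 * x' + 3 * y' + 2 - (3 * x' + 1) = 3 * y' + 1 by omega]
  have c2 : (((3 * x' + 3 * y' + 2).choose (3 * x' + 2)) : ℚ)
      = (Nat.factorial (3 * x' + 3 * y' + 2) : ℚ) / ((Nat.factorial (3 * x' + 2) : ℚ) * (Nat.factorial (3 * y') : ℚ)) := by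
    rw [Nat.cast_choose ℚ (by omega), show 3 * x' + 3 * y' + 2 - (3 * x' + 2) = 3 * y' by omega]
  have c3 : (((3 * x' + 3 * y' + 2).choose (3 * y' + 1)) : ℚ)
      = (Nat.factorial (3 * x' + 3 * y' + 2) : ℚ) / ((Nat.factorial (3 * y' + 1) : ℚ) * (Nat.factorial (3 * x' + 1) : ℚ)) := by
    rw [Nat.cast_choose ℚ (by omega), show 3 * x' + 3 * y' + 2 - (3 * y' + 1) = 3 * x' + 1 by omega]
  have c4 : (((3 * x' + 3 * y' + 2).choose (3 * y' + 2)) : ℚ)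
      = (Nat.factorial (3 * x' + 3 * y' + 2) : ℚ) / ((Nat.factorial (3 * y' + 2) : ℚ) * (Nat.factorial (3 * x') : ℚ)) := by
    rw [Nat.cast_choose ℚ (by omega), show 3 * x' + 3 * y' + 2 - (3 * y' + 2) = 3 * x' by omega]
  have c5 : (((3 * x' + 3 * y' + 4).choose (3 * x' + 2)) : ℚ)
      = (Nat.factorial (3 * x' + 3 * y' + 4) : ℚ) / ((Nat.factorial (3 * x' + 2) : ℚ) * (Nat.factorial (3 * y' + 2) : ℚ)) := by
    rw [Nat.cast_choose ℚ (by omega), show 3 * x' + 3 * y' + 4 - (3 * x' + 2) = 3 * y' + 2 by omega]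
  have fp1 : (Nat.factorial (3 * x' + 1) : ℚ) = (3 * (x' : ℚ) + 1) * (Nat.factorial (3 * x') : ℚ) := by
    rw [Nat.factorial_succ]; push_cast; ring
  have fp2 : (Nat.factorial (3 * x' + 2) : ℚ) = (3 * (x' : ℚ) + 2) * ((3 * (x' : ℚ)) + 1) * (Nat.factorial (3 * x') : ℚ) := by
    rw [show 3 * x' + 2 = (3 * x' + 1) + 1 by ring, Nat.factorial_succ, Nat.factorial_succ]
    push_cast; ring
  have fq1 : (Nat.factorial (3 * y' + 1) : ℚ) = (3 * (y' : ℚ) + 1) * (Nat.factorial (3 * y') : ℚ) := by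
    rw [Nat.factorial_succ]; push_cast; ring
  have fq2 : (Nat.factorial (3 * y' + 2) : ℚ) = (3 * (y' : ℚ) + 2) * ((3 * (y' : ℚ)) + 1) * (Nat.factorial (3 * y') : ℚ) := by
    rw [show 3 * y' + 2 = (3 * y' + 1) + 1 by ring, Nat.factorial_succ, Nat.factorial_succ]
    push_cast; ring
  have fbig : (Nat.factorial (3 * x' + 3 * y' + 4) : ℚ)
      = (3 * (x' : ℚ) + 3 * y' + 4) * (3 * (x' : ℚ) + 3 * y' + 3) * (Nat.factorial (3 * x' + 3 * y' + 2) : ℚ) := by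
    rw [show 3 * x' + 3 * y' + 4 = ((3 * x' + 3 * y' + 2) + 1) + 1 by ring,
      Nat.factorial_succ, Nat.factorial_succ]
    push_cast; ring
  rw [c1, c2, c3, c4, c5, fp1, fp2, fq1, fq2, fbig]
  have hA : (Nat.factorial (3 * x') : ℚ) ≠ 0 := by positivity
  have hB : (Nat.factorial (3 * y') : ℚ) ≠ 0 := by positivity
  have hF : (Nat.factorial (3 * x' + 3 * y' + 2) : ℚ) ≠ 0 := by positivity
  have h1 : (3 * (x' : ℚ) + 1) ≠ 0 := by positivity
  have h2 : (3 * (x' : ℚ) + 2) ≠ 0 := by positivity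
  have h3 : (3 * (y' : ℚ) + 1) ≠ 0 := by positivity
  have h4 : (3 * (y' : ℚ) + 2) ≠ 0 := by positivity
  have h5 : (6 * (((x' : ℚ) + 1) + ((y' : ℚ) + 1) - 1)) ≠ 0 := by
    have : (0:ℚ) ≤ x' := by positivity
    have : (0:ℚ) ≤ y' := by positivity
    intro h; nlinarith
  have h6 : (3 * (((x' : ℚ) + 1) + ((y' : ℚ) + 1)) - 2) ≠ 0 := by
    have : (0:ℚ) ≤ x' := by positivity
    have : (0:ℚ) ≤ y' := by positivity
    intro h; nlinarith
  push_cast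
  set A := (Nat.factorial (3 * x') : ℚ) with hAdef
  set B := (Nat.factorial (3 * y') : ℚ) with hBdef
  set F := (Nat.factorial (3 * x' + 3 * y' + 2) : ℚ) with hFdef
  set X := (x' : ℚ) with hXdef
  set Y := (y' : ℚ) with hYdef
  have h7 : (X + 1 + (Y + 1) - 1) ≠ 0 := by intro h; apply h5; linear_combination 6 * h
  field_simp
  ring
/-- The symmetrized form of the Kontsevich recursion equals the unsymmetrized form. -/
theorem stmt_11 (d : ℕ) (hd : 2 ≤ d) (n : ℕ → ℚ) :
    (∑ d₁ ∈ Finset.Ico 1 d,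
        (((3 * d - 4).choose (3 * d₁ - 2) : ℚ) * (d₁ : ℚ) * ((d : ℚ) - (d₁ : ℚ))
            - ((3 * d - 4).choose (3 * d₁ - 1) : ℚ) * (d₁ : ℚ) ^ 2)
          * (d₁ : ℚ) * ((d : ℚ) - (d₁ : ℚ)) * n d₁ * n (d - d₁))
      = (1 / (6 * ((d : ℚ) - 1))) *
        ∑ d₁ ∈ Finset.Ico 1 d,
          ((d₁ : ℚ) * ((d : ℚ) - (d₁ : ℚ))
              - 2 * ((d₁ : ℚ) - ((d : ℚ) - (d₁ : ℚ))) ^ 2 / (3 * (d : ℚ) - 2))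
            * ((3 * d - 2).choose (3 * d₁ - 1) : ℚ)
            * (d₁ : ℚ) * ((d : ℚ) - (d₁ : ℚ)) * n d₁ * n (d - d₁) := by
  set f : ℕ → ℚ := fun d₁ =>
    (((3 * d - 4).choose (3 * d₁ - 2) : ℚ) * (d₁ : ℚ) * ((d : ℚ) - (d₁ : ℚ))
        - ((3 * d - 4).choose (3 * d₁ - 1) : ℚ) * (d₁ : ℚ) ^ 2)
      * (d₁ : ℚ) * ((d : ℚ) - (d₁ : ℚ)) * n d₁ * n (d - d₁) with hf
  set g : ℕ → ℚ := fun d₁ =>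
    (1 / (6 * ((d : ℚ) - 1))) *
      (((d₁ : ℚ) * ((d : ℚ) - (d₁ : ℚ))
          - 2 * ((d₁ : ℚ) - ((d : ℚ) - (d₁ : ℚ))) ^ 2 / (3 * (d : ℚ) - 2))
        * ((3 * d - 2).choose (3 * d₁ - 1) : ℚ)
        * (d₁ : ℚ) * ((d : ℚ) - (d₁ : ℚ)) * n d₁ * n (d - d₁)) with hg
  rw [Finset.mul_sum]
  have hswap : (∑ x ∈ Finset.Ico 1 d, f x) = ∑ x ∈ Finset.Ico 1 d, f (d - x) := by
    refine Finset.sum_nbij' (fun x => d - x) (fun x => d - x) ?_ ?_ ?_ ?_ ?_ <;>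
      intro a ha <;> simp only [Finset.mem_Ico] at * <;> [skip; skip; omega; omega; skip]
    · omega
    · omega
    · rw [show d - (d - a) = a by omega]
  have key : ∀ x ∈ Finset.Ico 1 d, f x + f (d - x) = 2 * g x := by
    intro x hx
    simp only [Finset.mem_Ico] at hx
    obtain ⟨y, rfl⟩ : ∃ y, d = x + y := ⟨d - x, by omega⟩
    have hy : 1 ≤ y := by omega
    have hxy : x + y - x = y := by omega
    have hyx : x + y - y = x := by omega
    have hcast : ((x + y : ℕ) : ℚ) = (x : ℚ) + y := by push_cast; ring
    simp only [hf, hg, hxy, hyx, hcast]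
    have hsubx : ((x : ℚ) + y - x) = (y : ℚ) := by ring
    have hsuby : ((x : ℚ) + y - y) = (x : ℚ) := by ring
    rw [hsubx, hsuby]
    have h := kont_key x y hx.1 hy
    have hkey2 :
        (((3 * (x + y) - 4).choose (3 * y - 2) : ℚ) * y * x
          - ((3 * (x + y) - 4).choose (3 * y - 1) : ℚ) * (y : ℚ) ^ 2) * y * x * (n y * n x)
        = (2 * (1 / (6 * ((x : ℚ) + y - 1))) *
            (((x : ℚ) * y - 2 * ((x : ℚ) - y) ^ 2 / (3 * ((x : ℚ) + y) - 2))
              * ((3 * (x + y) - 2).choose (3 * x - 1) : ℚ) * x * y)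
          - (((3 * (x + y) - 4).choose (3 * x - 2) : ℚ) * x * y
            - ((3 * (x + y) - 4).choose (3 * x - 1) : ℚ) * (x : ℚ) ^ 2) * x * y) * (n x * n y) := by
      rw [← h]; ring
    linear_combination hkey2
  have h2 : (2 : ℚ) * ∑ x ∈ Finset.Ico 1 d, f x = 2 * ∑ x ∈ Finset.Ico 1 d, g x := by
    calc (2 : ℚ) * ∑ x ∈ Finset.Ico 1 d, f x
        = (∑ x ∈ Finset.Ico 1 d, f x) + ∑ x ∈ Finset.Ico 1 d, f (d - x) := by
          rw [← hswap]; ring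
      _ = ∑ x ∈ Finset.Ico 1 d, (f x + f (d - x)) := by rw [Finset.sum_add_distrib]
      _ = ∑ x ∈ Finset.Ico 1 d, 2 * g x := Finset.sum_congr rfl key
      _ = 2 * ∑ x ∈ Finset.Ico 1 d, g x := by rw [Finset.mul_sum]
  have := mul_left_cancel₀ (two_ne_zero) h2
  simpa [hg, Finset.mul_sum] using this
end

section
/- Every holomorphic section of the line bundle O(d) = γ*^⊗d over ℙⁿ is induced by a unique homogeneous polynomial of degree d in n+1 variables; i.e., the space of global holomorphic sections of O(d) on ℙⁿ is isomorphic as a vector space to the space of degree-d homogeneous polynomials in n+1 variables, which has dimension C(n+d, d). -/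
open Polynomial in
lemma aux_liouville_growth (d : ℕ) : ∀ (f : ℂ → ℂ), Differentiable ℂ f →
    ∀ C : ℝ, (∀ z, ‖f z‖ ≤ C * (1 + ‖z‖) ^ d) →
    ∃ Q : Polynomial ℂ, Q.natDegree ≤ d ∧ ∀ z, Q.eval z = f z := by
  induction d with
  | zero =>
    intro f hf C hC
    have hb : Bornology.IsBounded (Set.range f) := by
      rw [isBounded_iff_forall_norm_le]
      exact ⟨C, by rintro x ⟨z, rfl⟩; simpa using hC z⟩
    exact ⟨Polynomial.C (f 0), by simp, fun z => by
      simp [hf.apply_eq_apply_of_bounded hb 0 z]⟩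
  | succ d ih =>
    intro f hf C hC
    have hf00 : (0:ℝ) ≤ ‖f 0‖ := norm_nonneg _
    have hC0 : 0 ≤ C := le_trans hf00 (by simpa using hC 0)
    set F := dslope f 0 with hFdef
    have hF : Differentiable ℂ F := by
      rw [← differentiableOn_univ] at hf ⊢
      exact (Complex.differentiableOn_dslope (by simp)).mpr hf
    obtain ⟨M, hM⟩ := (isCompact_closedBall (0:ℂ) 1).exists_bound_of_continuousOn
      hF.continuous.continuousOn
    have key : ∀ z : ℂ, ‖F z‖ ≤ (max M (2 * C + ‖f 0‖)) * (1 + ‖z‖) ^ d := by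
      intro z
      have h1 : (1:ℝ) ≤ (1 + ‖z‖) ^ d := one_le_pow₀ (by linarith [norm_nonneg z])
      rcases le_or_gt ‖z‖ 1 with h | h
      · calc ‖F z‖ ≤ M := hM z (by simpa using h)
          _ = M * 1 := (mul_one M).symm
          _ ≤ max M (2 * C + ‖f 0‖) * (1 + ‖z‖) ^ d :=
            mul_le_mul (le_max_left _ _) h1 zero_le_one
              (le_trans hf00 (le_max_of_le_right (by linarith)))
      · have hz0 : z ≠ 0 := by intro h0; simp [h0] at h; linarith
        have hzpos : (0:ℝ) < ‖z‖ := by linarith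
        have hFz : F z = (f z - f 0) / z := by
          rw [hFdef, dslope_of_ne f hz0, slope_def_field]
          simp [div_eq_mul_inv]
        have hnorm : ‖F z‖ = ‖f z - f 0‖ / ‖z‖ := by rw [hFz, norm_div]
        have hnum : ‖f z - f 0‖ ≤ C * (1 + ‖z‖) ^ (d+1) + ‖f 0‖ := by
          refine le_trans (norm_sub_le _ _) ?_
          have := hC z
          linarith
        have hstep : (C * (1 + ‖z‖) ^ (d+1) + ‖f 0‖) / ‖z‖
            ≤ (2 * C + ‖f 0‖) * (1 + ‖z‖) ^ d := by
          rw [div_le_iff₀ hzpos]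
          have e1 : (1 + ‖z‖) ^ (d+1) = (1 + ‖z‖) ^ d * (1 + ‖z‖) := pow_succ _ _
          have hp0 : (0:ℝ) ≤ (1 + ‖z‖) ^ d := by positivity
          have k1 : C * ((1 + ‖z‖) ^ d * (1 + ‖z‖)) ≤ C * ((1 + ‖z‖) ^ d * (2 * ‖z‖)) :=
            mul_le_mul_of_nonneg_left
              (mul_le_mul_of_nonneg_left (by linarith) hp0) hC0
          have k2 : ‖f 0‖ * 1 ≤ ‖f 0‖ * ((1 + ‖z‖) ^ d * ‖z‖) :=
            mul_le_mul_of_nonneg_left (by nlinarith) hf00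
          nlinarith [k1, k2]
        calc ‖F z‖ = ‖f z - f 0‖ / ‖z‖ := hnorm
          _ ≤ (C * (1 + ‖z‖) ^ (d+1) + ‖f 0‖) / ‖z‖ :=
            by gcongr
          _ ≤ (2 * C + ‖f 0‖) * (1 + ‖z‖) ^ d := hstep
          _ ≤ _ := mul_le_mul_of_nonneg_right (le_max_right _ _) (by positivity)
    obtain ⟨Q', hQ'd, hQ'⟩ := ih F hF _ key
    refine ⟨Polynomial.C (f 0) + Polynomial.X * Q', ?_, fun z => ?_⟩
    · refine le_trans (Polynomial.natDegree_add_le _ _) (max_le (by simp) ?_)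
      refine le_trans Polynomial.natDegree_mul_le ?_
      simp only [Polynomial.natDegree_X]
      omega
    · have hd := sub_smul_dslope f 0 z
      simp only [sub_zero, smul_eq_mul, ← hFdef] at hd
      simp only [Polynomial.eval_add, Polynomial.eval_C, Polynomial.eval_mul,
        Polynomial.eval_X, hQ']
      linear_combination hd

open MvPolynomial in
lemma aux_eval_smul {N k : ℕ} {φ : MvPolynomial (Fin N) ℂ} (hφ : φ.IsHomogeneous k)
    (t : ℂ) (z : Fin N → ℂ) : eval (t • z) φ = t ^ k * eval z φ := by
  rw [eval_eq, eval_eq, Finset.mul_sum]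
  refine Finset.sum_congr rfl fun α hα => ?_
  have hdeg : α.degree = k := by
    rw [Finsupp.degree_eq_weight_one]
    exact hφ (mem_support_iff.mp hα)
  have : ∏ i ∈ α.support, (t • z) i ^ α i
      = t ^ k * ∏ i ∈ α.support, z i ^ α i := by
    simp only [Pi.smul_apply, smul_eq_mul, mul_pow]
    rw [Finset.prod_mul_distrib, Finset.prod_pow_eq_pow_sum]
    congr 1
    rw [← hdeg]; rfl
  rw [this]; ring

open MvPolynomial in
lemma aux_mv_poly (d : ℕ) : ∀ (m : ℕ) (h : (Fin m → ℂ) → ℂ), Differentiable ℂ h →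
    ∀ C : ℝ, (∀ w, ‖h w‖ ≤ C * (1 + ‖w‖) ^ d) →
    ∃ P : MvPolynomial (Fin m) ℂ, ∀ w, eval w P = h w := by
  intro m
  induction m with
  | zero =>
    intro h _ C _
    refine ⟨MvPolynomial.C (h 0), fun w => ?_⟩
    have hw : w = 0 := Subsingleton.elim _ _
    simp [hw]
  | succ m ih =>
    intro h hdiff C hC
    have hC0 : 0 ≤ C := le_trans (norm_nonneg (h 0)) (by simpa using hC 0)
    have hsd1 : ∀ w : Fin m → ℂ, Differentiable ℂ (fun z : ℂ => h (Fin.snoc w z)) := by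
      intro w
      apply hdiff.comp
      rw [differentiable_pi]
      intro i
      induction i using Fin.lastCases with
      | last => simp only [Fin.snoc_last]; exact differentiable_id
      | cast j => simp only [Fin.snoc_castSucc]; exact differentiable_const _
    have hsd2 : ∀ c : ℂ, Differentiable ℂ (fun w : Fin m → ℂ => h (Fin.snoc w c)) := by
      intro c
      apply hdiff.comp
      rw [differentiable_pi]
      intro i
      induction i using Fin.lastCases with
      | last => simp only [Fin.snoc_last]; exact differentiable_const _
      | cast j =>
        simp only [Fin.snoc_castSucc]
        exact (ContinuousLinearMap.proj j : (Fin m → ℂ) →L[ℂ] ℂ).differentiable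
    have hsnorm : ∀ (w : Fin m → ℂ) (z : ℂ),
        ‖(Fin.snoc w z : Fin (m+1) → ℂ)‖ ≤ ‖w‖ + ‖z‖ := by
      intro w z
      rw [pi_norm_le_iff_of_nonneg (by positivity)]
      intro i
      induction i using Fin.lastCases with
      | last => simp only [Fin.snoc_last]; linarith [norm_nonneg w]
      | cast j =>
        simp only [Fin.snoc_castSucc]
        linarith [norm_le_pi_norm w j, norm_nonneg z]
    have hbound : ∀ (w : Fin m → ℂ) (z : ℂ),
        ‖h (Fin.snoc w z)‖ ≤ (C * (1 + ‖w‖) ^ d) * (1 + ‖z‖) ^ d := by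
      intro w z
      refine le_trans (hC _) ?_
      rw [mul_assoc, ← mul_pow]
      apply mul_le_mul_of_nonneg_left ?_ hC0
      apply pow_le_pow_left₀ (by positivity)
      have := hsnorm w z
      nlinarith [norm_nonneg w, norm_nonneg z]
    set v : ℕ → ℂ := (Nat.cast : ℕ → ℂ) with hv
    have hvinj : Set.InjOn v (Finset.range (d+1)) :=
      fun a _ b _ hab => Nat.cast_injective hab
    have slice : ∀ (w : Fin m → ℂ) (z : ℂ),
        h (Fin.snoc w z) = ∑ j ∈ Finset.range (d+1),
          h (Fin.snoc w (j : ℂ)) *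
            (Lagrange.basis (Finset.range (d+1)) v j).eval z := by
      intro w z
      obtain ⟨Q, hQd, hQ⟩ := aux_liouville_growth d (fun z => h (Fin.snoc w z))
        (hsd1 w) _ (hbound w)
      have hdeg : Q.degree < (Finset.range (d+1)).card := by
        rw [Finset.card_range]
        refine lt_of_le_of_lt Q.degree_le_natDegree ?_
        exact_mod_cast Nat.lt_succ_of_le hQd
      have := Lagrange.eq_interpolate hvinj hdeg
      calc h (Fin.snoc w z) = Q.eval z := (hQ z).symm
        _ = _ := by
          conv_lhs => rw [this]
          rw [Lagrange.interpolate_apply, Polynomial.eval_finset_sum]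
          refine Finset.sum_congr rfl fun j _ => ?_
          rw [Polynomial.eval_mul, Polynomial.eval_C, hQ]
    have hcoef : ∀ j : ℕ, ∃ P : MvPolynomial (Fin m) ℂ,
        ∀ w, eval w P = h (Fin.snoc w (j : ℂ)) := by
      intro j
      refine ih (fun w => h (Fin.snoc w (j : ℂ))) (hsd2 _) (C * (1 + (j:ℝ)) ^ d) ?_
      intro w
      have := hbound w (j : ℂ)
      have hj : ‖((j:ℕ):ℂ)‖ = (j:ℝ) := by
        simp
      rw [hj] at this
      calc ‖h (Fin.snoc w (j:ℂ))‖ ≤ C * (1 + ‖w‖) ^ d * (1 + (j:ℝ)) ^ d := this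
        _ = C * (1 + (j:ℝ)) ^ d * (1 + ‖w‖) ^ d := by ring
    choose Pj hPj using hcoef
    have haev : ∀ (B : Polynomial ℂ) (w : Fin (m+1) → ℂ),
        eval w (Polynomial.aeval (X (Fin.last m) : MvPolynomial (Fin (m+1)) ℂ) B)
          = B.eval (w (Fin.last m)) := by
      intro B w
      have h1 := Polynomial.aeval_algHom_apply (MvPolynomial.aeval w)
        (X (Fin.last m) : MvPolynomial (Fin (m+1)) ℂ) B
      simp only [MvPolynomial.aeval_X] at h1
      rw [← Polynomial.coe_aeval_eq_eval, h1]
      exact (RingHom.congr_fun (MvPolynomial.coe_aeval_eq_eval w) _).symm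
    refine ⟨∑ j ∈ Finset.range (d+1), rename Fin.castSucc (Pj j) *
      Polynomial.aeval (X (Fin.last m)) (Lagrange.basis (Finset.range (d+1)) v j),
      fun w => ?_⟩
    rw [map_sum]
    have : ∀ j ∈ Finset.range (d+1),
        eval w (rename Fin.castSucc (Pj j) *
          Polynomial.aeval (X (Fin.last m)) (Lagrange.basis (Finset.range (d+1)) v j))
        = h (Fin.snoc (w ∘ Fin.castSucc) (j:ℂ)) *
            (Lagrange.basis (Finset.range (d+1)) v j).eval (w (Fin.last m)) := by
      intro j _
      rw [map_mul, eval_rename, hPj, haev]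
    rw [Finset.sum_congr rfl this, ← slice (w ∘ Fin.castSucc) (w (Fin.last m))]
    congr 1
    exact Fin.snoc_init_self w

open MvPolynomial in
lemma aux_component_zero {N : ℕ} (d : ℕ) (P : MvPolynomial (Fin N) ℂ) (C : ℝ)
    (hC : ∀ w, ‖eval w P‖ ≤ C * (1 + ‖w‖) ^ d) {k : ℕ} (hk : d < k) :
    homogeneousComponent k P = 0 := by
  rcases lt_or_ge P.totalDegree k with htot | htot
  · exact homogeneousComponent_eq_zero _ P htot
  have hC0 : 0 ≤ C := le_trans (norm_nonneg (eval 0 P)) (by simpa using hC 0)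
  apply MvPolynomial.funext
  intro w0
  rw [map_zero]
  set R : Polynomial ℂ := ∑ i ∈ Finset.range (P.totalDegree + 1),
    Polynomial.C (eval w0 (homogeneousComponent i P)) * Polynomial.X ^ i with hR
  have hRe : ∀ t : ℂ, R.eval t = eval (t • w0) P := by
    intro t
    conv_rhs => rw [← MvPolynomial.sum_homogeneousComponent P]
    rw [map_sum, hR, Polynomial.eval_finset_sum]
    refine Finset.sum_congr rfl fun i _ => ?_
    rw [aux_eval_smul (homogeneousComponent_isHomogeneous i P) t w0,
      Polynomial.eval_mul, Polynomial.eval_C, Polynomial.eval_pow, Polynomial.eval_X]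
    ring
  have hgrow : ∀ t : ℂ, ‖R.eval t‖ ≤ (C * (1 + ‖w0‖) ^ d) * (1 + ‖t‖) ^ d := by
    intro t
    rw [hRe]
    refine le_trans (hC _) ?_
    rw [mul_assoc, ← mul_pow]
    apply mul_le_mul_of_nonneg_left ?_ hC0
    apply pow_le_pow_left₀ (by positivity)
    rw [norm_smul]
    nlinarith [norm_nonneg t, norm_nonneg w0]
  obtain ⟨Q, hQd, hQ⟩ := aux_liouville_growth d (fun t => R.eval t)
    (R.differentiable) _ hgrow
  have hQR : Q = R := Polynomial.funext hQ
  have hcoeff : R.coeff k = 0 := by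
    rw [← hQR]
    exact Polynomial.coeff_eq_zero_of_natDegree_lt (lt_of_le_of_lt hQd hk)
  rw [hR, Polynomial.finset_sum_coeff] at hcoeff
  rw [Finset.sum_eq_single k] at hcoeff
  · simpa using hcoeff
  · intro b _ hbk
    simp [Polynomial.coeff_C_mul, Polynomial.coeff_X_pow, Ne.symm hbk]
  · intro hk'
    exact absurd (Finset.mem_range.mpr (by omega)) hk'

open MvPolynomial Finset in
lemma aux_chart0 (n d : ℕ) (g : (Fin (n+1) → ℂ) → ℂ)
    (hg : DifferentiableOn ℂ g {z | z ≠ 0})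
    (hom : ∀ t : ℂ, t ≠ 0 → ∀ z : Fin (n+1) → ℂ, z ≠ 0 → g (t • z) = t ^ d * g z) :
    ∃ p : MvPolynomial (Fin (n+1)) ℂ, p.IsHomogeneous d ∧
      ∀ z : Fin (n+1) → ℂ, z 0 ≠ 0 → eval z p = g z := by
  have hopen : IsOpen {z : Fin (n+1) → ℂ | z ≠ 0} := isOpen_ne
  obtain ⟨M, hM⟩ := (isCompact_sphere (0 : Fin (n+1) → ℂ) 1).exists_bound_of_continuousOn
    (hg.continuousOn.mono (by
      intro z hz
      simp only [Set.mem_setOf_eq]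
      intro h0
      rw [mem_sphere_iff_norm, h0] at hz
      simp at hz))
  set M' := max M 0 with hM'
  have hM'0 : (0:ℝ) ≤ M' := le_max_right _ _
  have hglob : ∀ v : Fin (n+1) → ℂ, v ≠ 0 → ‖g v‖ ≤ M' * ‖v‖ ^ d := by
    intro v hv
    have hnv : ‖v‖ ≠ 0 := norm_ne_zero_iff.mpr hv
    have hnvpos : (0:ℝ) < ‖v‖ := norm_pos_iff.mpr hv
    set c : ℂ := ((‖v‖ : ℂ))⁻¹ with hc
    have hcv : ‖c • v‖ = 1 := by
      rw [norm_smul, hc, norm_inv, Complex.norm_real, Real.norm_eq_abs,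
        abs_of_pos hnvpos, inv_mul_cancel₀ hnv]
    have hcvne : c • v ≠ 0 := by
      intro h0; rw [h0] at hcv; simp at hcv
    have hveq : ((‖v‖ : ℂ)) • (c • v) = v := by
      rw [smul_smul, hc, mul_inv_cancel₀ (by exact_mod_cast hnv), one_smul]
    have := hom ((‖v‖ : ℂ)) (by exact_mod_cast hnv) (c • v) hcvne
    rw [hveq] at this
    rw [this, norm_mul, norm_pow, Complex.norm_real, Real.norm_eq_abs,
      abs_of_pos hnvpos]
    have hsphere : c • v ∈ Metric.sphere (0 : Fin (n+1) → ℂ) 1 := by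
      rw [mem_sphere_iff_norm, sub_zero]; exact hcv
    calc ‖v‖ ^ d * ‖g (c • v)‖ ≤ ‖v‖ ^ d * M' :=
          mul_le_mul_of_nonneg_left (le_trans (hM _ hsphere) (le_max_left _ _))
            (by positivity)
      _ = M' * ‖v‖ ^ d := mul_comm _ _
  set h : (Fin n → ℂ) → ℂ := fun w => g (Fin.cons 1 w) with hh
  have hconsne : ∀ w : Fin n → ℂ, (Fin.cons 1 w : Fin (n+1) → ℂ) ≠ 0 := by
    intro w h0
    have := congrFun h0 0
    simp at this
  have hdiffh : Differentiable ℂ h := by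
    intro w
    have h1 : DifferentiableAt ℂ g (Fin.cons 1 w) :=
      hg.differentiableAt (hopen.mem_nhds (hconsne w))
    apply DifferentiableAt.comp
    · exact h1
    · apply differentiableAt_pi.mpr
      intro i
      induction i using Fin.cases with
      | zero => simp only [Fin.cons_zero]; exact differentiableAt_const _
      | succ j =>
        simp only [Fin.cons_succ]
        exact ((ContinuousLinearMap.proj j : (Fin n → ℂ) →L[ℂ] ℂ).differentiable) w
  have hhg : ∀ w : Fin n → ℂ, ‖h w‖ ≤ M' * (1 + ‖w‖) ^ d := by
    intro w
    refine le_trans (hglob _ (hconsne w)) ?_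
    apply mul_le_mul_of_nonneg_left ?_ hM'0
    apply pow_le_pow_left₀ (norm_nonneg _)
    rw [pi_norm_le_iff_of_nonneg (by positivity)]
    intro i
    induction i using Fin.cases with
    | zero => simp only [Fin.cons_zero]; norm_num [norm_nonneg w]; try positivity
    | succ j =>
      simp only [Fin.cons_succ]
      linarith [norm_le_pi_norm w j, norm_nonneg w]
  obtain ⟨P, hP⟩ := aux_mv_poly d n h hdiffh M' hhg
  have hPC : ∀ w, ‖eval w P‖ ≤ M' * (1 + ‖w‖) ^ d := fun w => by rw [hP]; exact hhg w
  have hcomp : ∀ k, d < k → homogeneousComponent k P = 0 :=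
    fun k hk => aux_component_zero d P M' hPC hk
  set p : MvPolynomial (Fin (n+1)) ℂ := ∑ k ∈ range (d+1),
    (X 0) ^ (d - k) * rename Fin.succ (homogeneousComponent k P) with hp
  have hsum : ∑ k ∈ range (d+1), homogeneousComponent k P = P := by
    set N := max d P.totalDegree with hN
    have e1 : ∑ k ∈ range (P.totalDegree + 1), homogeneousComponent k P
        = ∑ k ∈ range (N+1), homogeneousComponent k P := by
      apply Finset.sum_subset
      · exact Finset.range_subset_range.mpr (by omega)
      · intro k _ hk
        exact homogeneousComponent_eq_zero _ P (by simp at hk ⊢; omega)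
    have e2 : ∑ k ∈ range (d + 1), homogeneousComponent k P
        = ∑ k ∈ range (N+1), homogeneousComponent k P := by
      apply Finset.sum_subset
      · exact Finset.range_subset_range.mpr (by omega)
      · intro k _ hk
        exact hcomp k (by simp at hk; omega)
    rw [e2, ← e1, MvPolynomial.sum_homogeneousComponent]
  refine ⟨p, ?_, ?_⟩
  · rw [← mem_homogeneousSubmodule, hp]
    apply Submodule.sum_mem
    intro k hk
    rw [mem_homogeneousSubmodule]
    have h1 : ((X 0 : MvPolynomial (Fin (n+1)) ℂ) ^ (d - k)).IsHomogeneous (1 * (d-k)) :=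
      (isHomogeneous_X ℂ 0).pow (d - k)
    rw [one_mul] at h1
    have h2 : (rename Fin.succ (homogeneousComponent k P)).IsHomogeneous k :=
      (homogeneousComponent_isHomogeneous k P).rename_isHomogeneous
    have h3 := h1.mul h2
    rwa [Nat.sub_add_cancel (by simp at hk; omega)] at h3
  · intro z hz0
    set u : Fin n → ℂ := (z 0)⁻¹ • (z ∘ Fin.succ) with hu
    have hzu : z ∘ Fin.succ = (z 0) • u := by
      funext j
      simp only [hu, Pi.smul_apply, Function.comp_apply, smul_eq_mul]
      field_simp
    have key1 : ∀ k ∈ range (d+1),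
        eval z ((X (0 : Fin (n+1))) ^ (d - k) * rename Fin.succ (homogeneousComponent k P))
          = (z 0) ^ d * eval u (homogeneousComponent k P) := by
      intro k hk
      rw [map_mul, map_pow, eval_X, eval_rename]
      have : (z ∘ Fin.succ) = (z 0) • u := hzu
      rw [this, aux_eval_smul (homogeneousComponent_isHomogeneous k P)]
      rw [← mul_assoc, ← pow_add, Nat.sub_add_cancel (by simp at hk; omega)]
    rw [hp, map_sum, Finset.sum_congr rfl key1, ← Finset.mul_sum, ← map_sum, hsum, hP]
    have hcons : (z 0) • (Fin.cons 1 u : Fin (n+1) → ℂ) = z := by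
      funext i
      induction i using Fin.cases with
      | zero => simp
      | succ j =>
        simp only [Pi.smul_apply, Fin.cons_succ, smul_eq_mul, hu, Pi.smul_apply,
          Function.comp_apply]
        field_simp
    rw [hh]
    have := hom (z 0) hz0 (Fin.cons 1 u) (hconsne u)
    rw [hcons] at this
    exact this.symm

open MvPolynomial in
lemma aux_exists (n d : ℕ) (g : (Fin (n+1) → ℂ) → ℂ)
    (hg : DifferentiableOn ℂ g {z | z ≠ 0})
    (hom : ∀ t : ℂ, t ≠ 0 → ∀ z : Fin (n+1) → ℂ, z ≠ 0 → g (t • z) = t ^ d * g z) :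
    ∃ p : MvPolynomial (Fin (n+1)) ℂ, p.IsHomogeneous d ∧
      ∀ z : Fin (n+1) → ℂ, z ≠ 0 → eval z p = g z := by
  have charts : ∀ i : Fin (n+1), ∃ p : MvPolynomial (Fin (n+1)) ℂ, p.IsHomogeneous d ∧
      ∀ z : Fin (n+1) → ℂ, z i ≠ 0 → eval z p = g z := by
    intro i
    set σ := Equiv.swap (0 : Fin (n+1)) i with hσ
    set gi : (Fin (n+1) → ℂ) → ℂ := fun z => g (z ∘ σ) with hgi
    have hcomp_ne : ∀ z : Fin (n+1) → ℂ, z ≠ 0 → (z ∘ σ) ≠ 0 := by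
      intro z hz h0
      apply hz; funext j
      have := congrFun h0 (σ.symm j)
      simpa using this
    have hlin : Differentiable ℂ (fun z : Fin (n+1) → ℂ => z ∘ σ) := by
      rw [differentiable_pi]
      intro j
      exact (ContinuousLinearMap.proj (σ j) : (Fin (n+1) → ℂ) →L[ℂ] ℂ).differentiable
    have hgid : DifferentiableOn ℂ gi {z | z ≠ 0} := by
      apply hg.comp hlin.differentiableOn
      intro z hz
      exact hcomp_ne z hz
    have homi : ∀ t : ℂ, t ≠ 0 → ∀ z : Fin (n+1) → ℂ, z ≠ 0 → gi (t • z) = t ^ d * gi z := by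
      intro t ht z hz
      have h1 : (t • z) ∘ ⇑σ = t • (z ∘ ⇑σ) := rfl
      rw [hgi]
      simp only [h1]
      exact hom t ht (z ∘ σ) (hcomp_ne z hz)
    obtain ⟨q, hq1, hq2⟩ := aux_chart0 n d gi hgid homi
    refine ⟨rename σ q, hq1.rename_isHomogeneous, ?_⟩
    intro z hzi
    rw [eval_rename, hq2]
    · show g ((z ∘ ⇑σ) ∘ ⇑σ) = g z
      congr 1
      funext j
      simp [hσ, Equiv.swap_apply_self]
    · simpa [hσ, Equiv.swap_apply_left] using hzi
  choose pp hppH hppE using charts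
  have hpp0 : ∀ i : Fin (n+1), pp i = pp 0 := by
    intro i
    have key : ∀ z : Fin (n+1) → ℂ,
        eval z (pp i * X 0 * X i) = eval z (pp 0 * X 0 * X i) := by
      intro z
      by_cases h0 : z 0 = 0
      · simp [map_mul, h0]
      · by_cases hi : z i = 0
        · simp [map_mul, hi]
        · simp only [map_mul, eval_X]
          rw [hppE i z hi, hppE 0 z h0]
    have h2 := MvPolynomial.funext key
    have h3 := mul_right_cancel₀ (MvPolynomial.X_ne_zero (R := ℂ) i) h2
    exact mul_right_cancel₀ (MvPolynomial.X_ne_zero (R := ℂ) 0) h3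
  refine ⟨pp 0, hppH 0, ?_⟩
  intro z hz
  obtain ⟨i, hi⟩ := Function.ne_iff.mp hz
  rw [← hpp0 i]
  exact hppE i z (by simpa using hi)

set_option maxHeartbeats 1000000 in
/-- Every holomorphic section of O(d) on ℙⁿ — i.e. every holomorphic function on
ℂ^{n+1} ∖ {0} homogeneous of degree d — is induced by a unique homogeneous
polynomial of degree d; and the space of such polynomials has dimension C(n+d,d). -/
theorem stmt_15 (n d : ℕ) :
    (∀ g : (Fin (n + 1) → ℂ) → ℂ,
      DifferentiableOn ℂ g {z | z ≠ 0} →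
      (∀ t : ℂ, t ≠ 0 → ∀ z : Fin (n + 1) → ℂ, z ≠ 0 → g (t • z) = t ^ d * g z) →
      ∃! p : MvPolynomial (Fin (n + 1)) ℂ,
        p.IsHomogeneous d ∧ ∀ z : Fin (n + 1) → ℂ, z ≠ 0 → MvPolynomial.eval z p = g z)
    ∧ Module.finrank ℂ ↥(MvPolynomial.homogeneousSubmodule (Fin (n + 1)) ℂ d)
        = (n + d).choose d := by
  constructor
  · intro g hg hom
    obtain ⟨p, hp1, hp2⟩ := aux_exists n d g hg hom
    refine ⟨p, ⟨hp1, hp2⟩, ?_⟩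
    rintro q ⟨hq1, hq2⟩
    have key : ∀ z : Fin (n+1) → ℂ,
        MvPolynomial.eval z (q * MvPolynomial.X 0) = MvPolynomial.eval z (p * MvPolynomial.X 0) := by
      intro z
      by_cases hz : z = 0
      · subst hz; simp
      · simp only [map_mul, MvPolynomial.eval_X]
        rw [hq2 z hz, hp2 z hz]
    exact mul_right_cancel₀ (MvPolynomial.X_ne_zero (R := ℂ) 0)
      (MvPolynomial.funext key)
  · classical
    set s : Set (Fin (n+1) →₀ ℕ) := {α | α.degree = d} with hs
    have e0 := MvPolynomial.homogeneousSubmodule_eq_finsupp_supported (Fin (n+1)) ℂ d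
    have eqv : s ≃ Sym (Fin (n+1)) d := by
      refine Equiv.subtypeEquiv (Multiset.toFinsupp (α := Fin (n+1))).toEquiv.symm ?_
      intro α
      show α.degree = d ↔ Multiset.card (Multiset.toFinsupp.symm α) = d
      have : Multiset.toFinsupp.symm α = Finsupp.toMultiset α := rfl
      rw [this, Finsupp.card_toMultiset]
      simp [Finsupp.degree, Finsupp.sum]
      rfl
    have : Fintype s := Fintype.ofEquiv _ eqv.symm
    have l1 : Module.finrank ℂ ↥(MvPolynomial.homogeneousSubmodule (Fin (n + 1)) ℂ d)
        = Module.finrank ℂ ↥(Finsupp.supported ℂ ℂ s) := by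
      exact LinearEquiv.finrank_eq ((LinearEquiv.ofEq _ _ e0).trans
        ((AddMonoidAlgebra.supportedEquivFinsupp (R := ℂ) (S := ℂ) s).trans
          (Finsupp.supportedEquivFinsupp s).symm))
    rw [l1, LinearEquiv.finrank_eq (Finsupp.supportedEquivFinsupp s),
      LinearEquiv.finrank_eq (Finsupp.linearEquivFunOnFinite ℂ ℂ s),
      Module.finrank_fintype_fun_eq_card, Fintype.card_congr eqv,
      Sym.card_sym_eq_choose, Fintype.card_fin]
    congr 1
    omega
end
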